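/- arXiv:1511.08751 — 2 statements merged into one kernel-verified Lean document; each statement's English description precedes it below -/
import Mathlib

section
/- Let V be a real inner product space of finite dimension m ≥ 3 and let R be an algebraic curvature tensor on V. Suppose every (m − 1)-dimensional subspace of V is special for R. Then R is Einstein at the point: there exists λ ∈ ℝ such that for every orthonormal basis v_1, …, v_m of V and all w, η ∈ V one has ∑_{i=1}^{m} ⟨R(v_i, w) v_i, η⟩ = λ ⟨w, η⟩. -/
open RealInnerProductSpace Module

/-- An algebraic curvature tensor on a real inner product space `V`. -/
structure CurvatureTensor (V : Type*) [NormedAddCommGroup V] [InnerProductSpace ℝ V] where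
  R : V → V → V → V
  lin₁ : ∀ Y Z, IsLinearMap ℝ fun X => R X Y Z
  lin₂ : ∀ X Z, IsLinearMap ℝ fun Y => R X Y Z
  lin₃ : ∀ X Y, IsLinearMap ℝ fun Z => R X Y Z
  antisymm₁ : ∀ X Y Z W, ⟪R X Y Z, W⟫ = -⟪R Y X Z, W⟫
  antisymm₂ : ∀ X Y Z W, ⟪R X Y Z, W⟫ = -⟪R X Y W, Z⟫
  pair_symm : ∀ X Y Z W, ⟪R X Y Z, W⟫ = ⟪R Z W X, Y⟫
  bianchi : ∀ X Y Z, R X Y Z + R Y Z X + R Z X Y = 0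

/-- A subspace `W` is special for `T` if for every orthonormal basis `v_1, …, v_r` of `W`
and every `w ∈ W`, one has `∑ i, R (v i) w (v i) ∈ W`. -/
def CurvatureTensor.IsSpecial {V : Type*} [NormedAddCommGroup V] [InnerProductSpace ℝ V]
    (T : CurvatureTensor V) (W : Submodule ℝ V) : Prop :=
  ∀ (b : OrthonormalBasis (Fin (finrank ℝ W)) ℝ W) (w : V), w ∈ W →
    (∑ i, T.R (b i : V) w (b i)) ∈ W

/-! The sum `∑ i, ⟪R(vᵢ, Y) vᵢ, Z⟫` equals `∑ i, ⟪vᵢ, R(Y, vᵢ) Z⟫`, the trace of `x ↦ R(Y, x) Z`,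
so the Ricci operator `Y ↦ ∑ i, R(vᵢ, Y) vᵢ` does not depend on the orthonormal basis. Computing
it in a basis of `V` made of bases of the hyperplane `Zᗮ` and of the line `ℝ ∙ Z`, the first part
lies in `Zᗮ` because `Zᗮ` is special, and the second is orthogonal to `Z` by skew-symmetry. Hence
`⟪Ric Y, Z⟫ = 0` whenever `Y ⟂ Z`: every vector is an eigenvector of `Ric`, which is therefore a
multiple of the identity. -/

theorem LinearMap.exists_eq_smul_id_of_inner_eq_zero {𝕜 E : Type*} [RCLike 𝕜]
    [NormedAddCommGroup E] [InnerProductSpace 𝕜 E] {f : E →ₗ[𝕜] E}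
    (h : ∀ v w : E, inner 𝕜 v w = 0 → inner 𝕜 (f v) w = 0) : ∃ a : 𝕜, f = a • 1 := by
  refine exists_eq_smul_id_of_forall_notLinearIndependent fun v => ?_
  have hfv : f v ∈ 𝕜 ∙ v := by
    rw [← Submodule.orthogonal_orthogonal (𝕜 ∙ v)]
    exact fun w hw =>
      inner_eq_zero_symm.mp (h v w (Submodule.mem_orthogonal_singleton_iff_inner_right.mp hw))
  obtain ⟨a, ha⟩ := Submodule.mem_span_singleton.mp hfv
  rw [LinearIndependent.pair_iff]
  push Not
  exact ⟨a, -1, by simp [ha], by simp⟩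

theorem Submodule.finrank_orthogonal_span_singleton_eq_sub_one {𝕜 E : Type*} [RCLike 𝕜]
    [NormedAddCommGroup E] [InnerProductSpace 𝕜 E] [FiniteDimensional 𝕜 E] {v : E} (hv : v ≠ 0) :
    finrank 𝕜 (𝕜 ∙ v)ᗮ = finrank 𝕜 E - 1 := by
  have := (𝕜 ∙ v).finrank_add_finrank_orthogonal
  rw [finrank_span_singleton hv] at this
  omega

theorem Module.Basis.span_range_val {R M ι : Type*} [Semiring R] [AddCommMonoid M] [Module R M]
    {L : Submodule R M} (e : Basis ι R L) : Submodule.span R (Set.range fun i => (e i : M)) = L := by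
  rw [Set.range_comp' Subtype.val e, ← L.coe_subtype, Submodule.span_image, e.span_eq,
    Submodule.map_top, Submodule.range_subtype]

namespace OrthonormalBasis

variable {𝕜 E ι κ : Type*} [RCLike 𝕜] [NormedAddCommGroup E] [InnerProductSpace 𝕜 E]
  [Fintype ι] [Fintype κ] {K : Submodule 𝕜 E} [K.HasOrthogonalProjection]
  (b : OrthonormalBasis ι 𝕜 K) (c : OrthonormalBasis κ 𝕜 Kᗮ)

noncomputable def sumOrthogonal : OrthonormalBasis (ι ⊕ κ) 𝕜 E :=
  OrthonormalBasis.mk (v := Sum.elim (fun i => (b i : E)) (fun j => (c j : E)))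
    (by
      classical
      rw [orthonormal_iff_ite]
      rintro (i | j) (i' | j')
      · simpa using orthonormal_iff_ite.mp b.orthonormal i i'
      · simpa using Submodule.inner_right_of_mem_orthogonal (b i).2 (c j').2
      · simpa using Submodule.inner_left_of_mem_orthogonal (b i').2 (c j).2
      · simpa using orthonormal_iff_ite.mp c.orthonormal j j')
    (by
      have hb := b.toBasis.span_range_val
      have hc := c.toBasis.span_range_val
      simp only [OrthonormalBasis.coe_toBasis] at hb hc
      rw [Set.Sum.elim_range, Submodule.span_union, hb, hc,
        K.sup_orthogonal_of_hasOrthogonalProjection])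

@[simp]
theorem sumOrthogonal_apply_inl (i : ι) : b.sumOrthogonal c (.inl i) = b i := by
  simp [sumOrthogonal]

@[simp]
theorem sumOrthogonal_apply_inr (j : κ) : b.sumOrthogonal c (.inr j) = c j := by
  simp [sumOrthogonal]

end OrthonormalBasis

namespace CurvatureTensor

variable {V : Type*} [NormedAddCommGroup V] [InnerProductSpace ℝ V] (T : CurvatureTensor V)

theorem inner_R_self (X Y Z : V) : ⟪T.R X Y Z, Z⟫ = 0 := by
  linarith [T.antisymm₂ X Y Z Z]

theorem inner_R_self_left (X Y Z : V) : ⟪T.R X Y X, Z⟫ = ⟪X, T.R Y X Z⟫ := by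
  rw [T.antisymm₂, T.antisymm₁, neg_neg, real_inner_comm]

theorem inner_R_of_mem_span_singleton {X Z : V} (hX : X ∈ ℝ ∙ Z) (Y : V) :
    ⟪T.R X Y X, Z⟫ = 0 := by
  obtain ⟨t, rfl⟩ := Submodule.mem_span_singleton.mp hX
  rw [(T.lin₁ Y _).map_smul, (T.lin₃ _ Y).map_smul, smul_smul, real_inner_smul_left,
    T.inner_R_self, mul_zero]

theorem sum_inner_R_eq_trace {ι : Type*} [Fintype ι] (b : OrthonormalBasis ι ℝ V) (Y Z : V) :
    ∑ i, ⟪T.R (b i) Y (b i), Z⟫ = LinearMap.trace ℝ V (IsLinearMap.mk' _ (T.lin₂ Y Z)) := by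
  simp only [T.inner_R_self_left, LinearMap.trace_eq_sum_inner _ b, IsLinearMap.mk'_apply]

variable [FiniteDimensional ℝ V]

noncomputable def ricci : V →ₗ[ℝ] V :=
  ∑ i, IsLinearMap.mk' (fun Y => T.R (stdOrthonormalBasis ℝ V i) Y (stdOrthonormalBasis ℝ V i))
    (T.lin₂ _ _)

theorem ricci_apply {ι : Type*} [Fintype ι] (b : OrthonormalBasis ι ℝ V) (Y : V) :
    T.ricci Y = ∑ i, T.R (b i) Y (b i) := by
  refine ext_inner_right ℝ fun Z => ?_
  simp only [ricci, LinearMap.sum_apply, IsLinearMap.mk'_apply, sum_inner, sum_inner_R_eq_trace]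

theorem inner_ricci_eq_zero_of_isSpecial {Z : V} (hZ : T.IsSpecial (ℝ ∙ Z)ᗮ) {Y : V}
    (hYZ : ⟪Y, Z⟫ = 0) : ⟪T.ricci Y, Z⟫ = 0 := by
  have hY : Y ∈ (ℝ ∙ Z)ᗮ := Submodule.mem_orthogonal_singleton_iff_inner_left.mpr hYZ
  rw [T.ricci_apply ((stdOrthonormalBasis ℝ (ℝ ∙ Z)).sumOrthogonal (stdOrthonormalBasis ℝ _)),
    Fintype.sum_sum_type, inner_add_left, sum_inner]
  simp only [OrthonormalBasis.sumOrthogonal_apply_inl, OrthonormalBasis.sumOrthogonal_apply_inr]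
  rw [Finset.sum_eq_zero fun i _ => T.inner_R_of_mem_span_singleton (Subtype.mem _) Y, zero_add,
    ← Submodule.mem_orthogonal_singleton_iff_inner_left]
  exact hZ _ Y hY

end CurvatureTensor

theorem einstein_of_special_hyperplanes_general {V : Type*} [NormedAddCommGroup V] [InnerProductSpace ℝ V] [FiniteDimensional ℝ V]
    (T : CurvatureTensor V)
    (hspec : ∀ W : Submodule ℝ V, finrank ℝ W = finrank ℝ V - 1 → T.IsSpecial W) :
    ∃ lam : ℝ, ∀ (b : OrthonormalBasis (Fin (finrank ℝ V)) ℝ V) (w η : V),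
      ∑ i, ⟪T.R (b i) w (b i), η⟫ = lam * ⟪w, η⟫ := by
  have hricci : ∀ w η : V, ⟪w, η⟫ = 0 → ⟪T.ricci w, η⟫ = 0 := by
    intro w η hwη
    rcases eq_or_ne η 0 with rfl | hη
    · exact inner_zero_right _
    exact T.inner_ricci_eq_zero_of_isSpecial
      (hspec _ (Submodule.finrank_orthogonal_span_singleton_eq_sub_one hη)) hwη
  obtain ⟨lam, hlam⟩ := LinearMap.exists_eq_smul_id_of_inner_eq_zero hricci
  refine ⟨lam, fun b w η => ?_⟩
  rw [← sum_inner, ← T.ricci_apply, hlam, LinearMap.smul_apply, Module.End.one_apply,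
    real_inner_smul_left]

theorem einstein_of_special_hyperplanes {V : Type*} [NormedAddCommGroup V] [InnerProductSpace ℝ V] [FiniteDimensional ℝ V]
    (T : CurvatureTensor V) (hm : 3 ≤ finrank ℝ V)
    (hspec : ∀ W : Submodule ℝ V, finrank ℝ W = finrank ℝ V - 1 → T.IsSpecial W) :
    ∃ lam : ℝ, ∀ (b : OrthonormalBasis (Fin (finrank ℝ V)) ℝ V) (w η : V),
      ∑ i, ⟪T.R (b i) w (b i), η⟫ = lam * ⟪w, η⟫ :=
  einstein_of_special_hyperplanes_general T hspec
end

section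
/- Let (V, J, R) be an algebraic Kähler model of real dimension 2m with m ≥ 3 satisfying the XY-condition. Then for all vectors X, Y, Z ∈ V such that X, JX, Y, JY, Z, JZ are orthonormal, one has ⟨R(X,JX)Y,JX⟩ = 2⟨R(Z,JZ)X,JY⟩ = 4⟨R(Z,X)Z,Y⟩ = 4⟨R(JZ,X)JZ,Y⟩. -/
open RealInnerProductSpace Module

/-- An algebraic Kähler model: an algebraic curvature tensor together with a compatible
orthogonal complex structure `J`. -/
structure KahlerModel (V : Type*) [NormedAddCommGroup V] [InnerProductSpace ℝ V]
    extends CurvatureTensor V where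
  J : V →ₗ[ℝ] V
  J_isometry : ∀ X Y, ⟪J X, J Y⟫ = ⟪X, Y⟫
  J_sq : ∀ X, J (J X) = -X
  R_J_invariant : ∀ X Y Z, R (J X) (J Y) Z = R X Y Z
  R_J_commute : ∀ X Y Z, R X Y (J Z) = J (R X Y Z)

/-- The XY-condition: `⟪R(X,JX)Y, JX⟫ = ⟪R(Y,JY)X, JY⟫` whenever `X, JX, Y, JY`
are orthonormal. -/
def KahlerModel.XYCond {V : Type*} [NormedAddCommGroup V] [InnerProductSpace ℝ V]
    (T : KahlerModel V) : Prop :=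
  ∀ X Y : V, Orthonormal ℝ ![X, T.J X, Y, T.J Y] →
    ⟪T.R X (T.J X) Y, T.J X⟫ = ⟪T.R Y (T.J Y) X, T.J Y⟫

/-! Write `f(U, W) = ⟪R(U, JU)W, JU⟫`. For a unit vector `U = cY + sZ` the XY-condition gives
`f(U, X) = f(X, U)`: a cubic form in `(c, s)` equals a linear one on the unit circle, and
comparing them at four rational points identifies the `c s²`-coefficient of the cubic with
`f(X, Y)`. Doing this for `Z` and for `JZ` yields `2B + Q = P` and `2A + Q = P`, with
`P = f(X, Y)`, `Q = ⟪R(Z,JZ)X,JY⟫`, `A = ⟪R(Z,X)Z,Y⟫`, `B = ⟪R(JZ,X)JZ,Y⟫`, while the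
Bianchi identity gives `Q = A + B`. Hence `A = B = P/4` and `Q = P/2`. -/

lemma cubic_coeff_eq_of_forall_sq_add_sq_eq_one {a b α β p q : ℝ}
    (h : ∀ c s : ℝ, c ^ 2 + s ^ 2 = 1 →
      c ^ 3 * a + c ^ 2 * s * α + c * s ^ 2 * β + s ^ 3 * b = c * p + s * q) :
    β = p := by
  have h₁ := h 1 0 (by norm_num)
  have h₂ := h 0 1 (by norm_num)
  have h₃ := h (3 / 5) (4 / 5) (by norm_num)
  have h₄ := h (4 / 5) (3 / 5) (by norm_num)
  linear_combination h₁ - 25 / 12 * h₂ + 125 / 21 * h₃ - 125 / 28 * h₄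

namespace KahlerModel

variable {V : Type*} [NormedAddCommGroup V] [InnerProductSpace ℝ V] (T : KahlerModel V)

lemma R_add₁ (x y z w : V) : T.R (x + y) z w = T.R x z w + T.R y z w := (T.lin₁ z w).map_add x y

lemma R_add₂ (x y z w : V) : T.R z (x + y) w = T.R z x w + T.R z y w := (T.lin₂ z w).map_add x y

lemma R_add₃ (x y z w : V) : T.R z w (x + y) = T.R z w x + T.R z w y := (T.lin₃ z w).map_add x y

lemma R_smul₁ (c : ℝ) (x z w : V) : T.R (c • x) z w = c • T.R x z w :=
  (T.lin₁ z w).map_smul c x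

lemma R_smul₂ (c : ℝ) (x z w : V) : T.R z (c • x) w = c • T.R z x w :=
  (T.lin₂ z w).map_smul c x

lemma R_smul₃ (c : ℝ) (x z w : V) : T.R z w (c • x) = c • T.R z w x :=
  (T.lin₃ z w).map_smul c x

lemma R_neg₂ (x z w : V) : T.R z (-x) w = -T.R z x w := (T.lin₂ z w).map_neg x

lemma inner_J_left (x y : V) : ⟪T.J x, y⟫ = -⟪x, T.J y⟫ := by
  have h := T.J_isometry x (T.J y)
  rw [T.J_sq, inner_neg_right] at h
  linarith

lemma inner_self_J (x : V) : ⟪x, T.J x⟫ = 0 := by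
  have h := T.inner_J_left x x
  rw [real_inner_comm] at h
  linarith

lemma norm_J (x : V) : ‖T.J x‖ = ‖x‖ := by
  rw [norm_eq_sqrt_real_inner, norm_eq_sqrt_real_inner, T.J_isometry]

lemma orthonormal_pair_iff {x y : V} :
    Orthonormal ℝ ![x, T.J x, y, T.J y] ↔
      ‖x‖ = 1 ∧ ‖y‖ = 1 ∧ ⟪x, y⟫ = 0 ∧ ⟪x, T.J y⟫ = 0 := by
  constructor
  · intro h
    exact ⟨h.1 0, h.1 2, h.2 (i := 0) (j := 2) (by decide), h.2 (i := 0) (j := 3) (by decide)⟩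
  · rintro ⟨hx, hy, hxy, hxJy⟩
    have hyx : ⟪y, x⟫ = 0 := by rw [real_inner_comm, hxy]
    have hyJx : ⟪y, T.J x⟫ = 0 := by rw [real_inner_comm, inner_J_left, hxJy, neg_zero]
    refine ⟨fun i => ?_, fun i j hij => ?_⟩
    · fin_cases i <;> simp [hx, hy, norm_J]
    · fin_cases i <;> fin_cases j <;> simp at hij ⊢ <;>
        simp only [inner_self_J, inner_J_left, J_sq, inner_neg_right, hxy, hxJy, hyx, hyJx,
          neg_zero]

lemma orthonormal_pair_J_right {x y : V} (h : Orthonormal ℝ ![x, T.J x, y, T.J y]) :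
    Orthonormal ℝ ![x, T.J x, T.J y, T.J (T.J y)] := by
  obtain ⟨hx, hy, hxy, hxJy⟩ := T.orthonormal_pair_iff.1 h
  exact T.orthonormal_pair_iff.2
    ⟨hx, by rw [norm_J, hy], hxJy, by rw [J_sq, inner_neg_right, hxy, neg_zero]⟩

lemma R_swap (x y z : V) : T.R x y z = -T.R y x z :=
  ext_inner_right ℝ fun w => by rw [inner_neg_left]; exact T.antisymm₁ x y z w

lemma R_J_swap (x y z : V) : T.R x (T.J y) z = T.R y (T.J x) z := by
  rw [← T.R_J_invariant, J_sq, R_neg₂, R_swap, neg_neg]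

lemma inner_R_J_right (x y z w : V) : ⟪T.R x y z, T.J w⟫ = -⟪T.R x y (T.J z), w⟫ := by
  rw [R_J_commute, inner_J_left, neg_neg]

lemma inner_R_J_J (x y z w : V) : ⟪T.R x y (T.J z), T.J w⟫ = ⟪T.R x y z, w⟫ := by
  rw [R_J_commute, J_isometry]

lemma inner_bianchi (x y z w : V) :
    ⟪T.R x y z, w⟫ + ⟪T.R y z x, w⟫ + ⟪T.R z x y, w⟫ = 0 := by
  rw [← inner_add_left, ← inner_add_left, T.bianchi, inner_zero_left]

lemma inner_R_self_J_eq_add (x y z : V) :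
    ⟪T.R z (T.J z) x, T.J y⟫ = ⟪T.R z x z, y⟫ + ⟪T.R (T.J z) x (T.J z), y⟫ := by
  have h := T.inner_bianchi z (T.J z) x (T.J y)
  rw [T.inner_R_J_right (T.J z), T.inner_R_J_J, T.antisymm₁ x] at h
  linear_combination h

theorem xyCond_polarization (hxy : T.XYCond) {X Y Z : V}
    (hXY : Orthonormal ℝ ![X, T.J X, Y, T.J Y]) (hXZ : Orthonormal ℝ ![X, T.J X, Z, T.J Z])
    (hYZ : ⟪Y, Z⟫ = 0) :
    ⟪T.R Y (T.J Z) X, T.J Z⟫ + ⟪T.R Z (T.J Y) X, T.J Z⟫ + ⟪T.R Z (T.J Z) X, T.J Y⟫ =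
      ⟪T.R X (T.J X) Y, T.J X⟫ := by
  obtain ⟨hX, hY, hXY, hXJY⟩ := T.orthonormal_pair_iff.1 hXY
  obtain ⟨-, hZ, hXZ, hXJZ⟩ := T.orthonormal_pair_iff.1 hXZ
  refine cubic_coeff_eq_of_forall_sq_add_sq_eq_one (a := ⟪T.R Y (T.J Y) X, T.J Y⟫)
    (b := ⟪T.R Z (T.J Z) X, T.J Z⟫) (q := ⟪T.R X (T.J X) Z, T.J X⟫)
    (α := ⟪T.R Y (T.J Y) X, T.J Z⟫ + ⟪T.R Y (T.J Z) X, T.J Y⟫ +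
      ⟪T.R Z (T.J Y) X, T.J Y⟫) fun c s hcs => ?_
  have hU : Orthonormal ℝ ![c • Y + s • Z, T.J (c • Y + s • Z), X, T.J X] := by
    refine T.orthonormal_pair_iff.2 ⟨?_, hX, ?_, ?_⟩
    · rw [← pow_eq_one_iff_of_nonneg (norm_nonneg _) two_ne_zero, norm_add_sq_real, norm_smul,
        norm_smul, real_inner_smul_left, real_inner_smul_right, hYZ, hY, hZ, Real.norm_eq_abs,
        Real.norm_eq_abs, mul_one, mul_one, sq_abs, sq_abs]
      linear_combination hcs
    · rw [real_inner_comm, inner_add_right, real_inner_smul_right, real_inner_smul_right, hXY,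
        hXZ]
      ring
    · rw [real_inner_comm, inner_J_left, map_add, map_smul, map_smul, inner_add_right,
        real_inner_smul_right, real_inner_smul_right, hXJY, hXJZ]
      ring
  have h := hxy _ _ hU
  simp only [map_add, map_smul, R_add₁, R_add₂, R_add₃, R_smul₁, R_smul₂, R_smul₃,
    inner_add_left, inner_add_right, real_inner_smul_left, real_inner_smul_right] at h
  linear_combination h

end KahlerModel

theorem ZJZ_property_general {V : Type*} [NormedAddCommGroup V] [InnerProductSpace ℝ V]
    (T : KahlerModel V)
    (hxy : T.XYCond)
    (X Y Z : V) (h : Orthonormal ℝ ![X, T.J X, Y, T.J Y, Z, T.J Z]) :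
    ⟪T.R X (T.J X) Y, T.J X⟫ = 2 * ⟪T.R Z (T.J Z) X, T.J Y⟫ ∧
    ⟪T.R X (T.J X) Y, T.J X⟫ = 4 * ⟪T.R Z X Z, Y⟫ ∧
    ⟪T.R X (T.J X) Y, T.J X⟫ = 4 * ⟪T.R (T.J Z) X (T.J Z), Y⟫ := by
  have hXY : Orthonormal ℝ ![X, T.J X, Y, T.J Y] := T.orthonormal_pair_iff.2
    ⟨h.1 0, h.1 2, h.2 (i := 0) (j := 2) (by decide), h.2 (i := 0) (j := 3) (by decide)⟩
  have hXZ : Orthonormal ℝ ![X, T.J X, Z, T.J Z] := T.orthonormal_pair_iff.2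
    ⟨h.1 0, h.1 4, h.2 (i := 0) (j := 4) (by decide), h.2 (i := 0) (j := 5) (by decide)⟩
  have E₁ := T.xyCond_polarization hxy hXY hXZ (h.2 (i := 2) (j := 4) (by decide))
  have E₂ := T.xyCond_polarization hxy hXY (T.orthonormal_pair_J_right hXZ)
    (h.2 (i := 2) (j := 5) (by decide))
  have hB : ⟪T.R Z (T.J Y) X, T.J Z⟫ = ⟪T.R (T.J Z) X (T.J Z), Y⟫ := by
    rw [T.pair_symm, T.inner_R_J_right, T.antisymm₁, neg_neg]
  have hA : ⟪T.R Z Y X, Z⟫ = -⟪T.R Z X Z, Y⟫ := by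
    rw [T.pair_symm, T.antisymm₁]
  have hQ := T.inner_R_self_J_eq_add X Y Z
  rw [T.R_J_swap, hB] at E₁
  simp only [T.J_sq, T.R_neg₂, T.R_J_invariant, inner_neg_left, inner_neg_right, neg_neg] at E₂
  rw [T.antisymm₁ Y, hA, T.antisymm₁ (T.J Z)] at E₂
  exact ⟨by linarith, by linarith, by linarith⟩

theorem ZJZ_property {V : Type*} [NormedAddCommGroup V] [InnerProductSpace ℝ V] [FiniteDimensional ℝ V]
    (T : KahlerModel V) (m : ℕ) (hm : 3 ≤ m) (hdim : finrank ℝ V = 2 * m)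
    (hxy : T.XYCond)
    (X Y Z : V) (h : Orthonormal ℝ ![X, T.J X, Y, T.J Y, Z, T.J Z]) :
    ⟪T.R X (T.J X) Y, T.J X⟫ = 2 * ⟪T.R Z (T.J Z) X, T.J Y⟫ ∧
    ⟪T.R X (T.J X) Y, T.J X⟫ = 4 * ⟪T.R Z X Z, Y⟫ ∧
    ⟪T.R X (T.J X) Y, T.J X⟫ = 4 * ⟪T.R (T.J Z) X (T.J Z), Y⟫ :=
  ZJZ_property_general T hxy X Y Z h
end
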